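/- arXiv:2212.14438 — 5 statements merged into one kernel-verified Lean document; each statement's English description precedes it below -/
import Mathlib

section
/- A finite commutative ring R is a chain ring (its ideals are linearly ordered by inclusion) if and only if R is a local ring whose maximal ideal is principal. -/
/-!
In a chain ring every finitely generated ideal is principal, since a finite sum of ideals is the
largest summand; a finite ring is Noetherian, so its maximal ideal is principal, and a chain ring is
local. Conversely, if the maximal ideal of a Noetherian local ring is `(π)`, Krull's intersection
theorem gives every nonzero `a` a largest `n` with `π ^ n ∣ a`, and then `a = u * π ^ n` with `u`
a unit. Divisibility is therefore total, which is the same as the ideals forming a chain.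
-/

open IsLocalRing Ideal

section ChainRing

variable {R : Type*} [CommRing R]

theorem isBezout_of_le_total (h : ∀ I J : Ideal R, I ≤ J ∨ J ≤ I) : IsBezout R := by
  classical
  refine IsBezout.iff_span_pair_isPrincipal.mpr fun x y => ?_
  rw [span_insert]
  rcases h (span {x}) (span {y}) with hxy | hyx
  · rw [sup_eq_right.mpr hxy]; exact ⟨⟨y, rfl⟩⟩
  · rw [sup_eq_left.mpr hyx]; exact ⟨⟨x, rfl⟩⟩

section PrincipalMaximalIdeal

variable [IsLocalRing R] [IsNoetherianRing R] {π : R} (hπ : maximalIdeal R = span {π})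
include hπ

theorem exists_not_pow_dvd_of_maximalIdeal_eq_span {a : R} (ha : a ≠ 0) :
    ∃ n : ℕ, ¬π ^ n ∣ a := by
  have hKrull := iInf_pow_eq_bot_of_isLocalRing (maximalIdeal R) (maximalIdeal.isMaximal R).ne_top
  by_contra! hdvd
  refine ha ((mem_bot (R := R)).mp (hKrull ▸ mem_iInf.mpr fun n => ?_))
  rw [hπ, span_singleton_pow, mem_span_singleton]
  exact hdvd n

theorem exists_isUnit_mul_pow_of_maximalIdeal_eq_span {a : R} (ha : a ≠ 0) :
    ∃ (u : R) (n : ℕ), IsUnit u ∧ a = u * π ^ n := by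
  obtain ⟨N, hN⟩ := exists_not_pow_dvd_of_maximalIdeal_eq_span hπ ha
  obtain ⟨n, ⟨u, rfl⟩, hn⟩ : ∃ n, π ^ n ∣ a ∧ ¬π ^ (n + 1) ∣ a := by
    by_contra! hstep
    exact hN (Nat.rec (by simp) hstep N)
  refine ⟨u, n, ?_, mul_comm _ _⟩
  by_contra hu
  have hπu : π ∣ u := by
    rw [← mem_span_singleton, ← hπ]
    exact hu
  exact hn (pow_succ π n ▸ mul_dvd_mul_left _ hπu)

theorem dvd_total_of_maximalIdeal_eq_span (a b : R) : a ∣ b ∨ b ∣ a := by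
  rcases eq_or_ne a 0 with rfl | ha
  · exact Or.inr (dvd_zero b)
  rcases eq_or_ne b 0 with rfl | hb
  · exact Or.inl (dvd_zero a)
  obtain ⟨u, m, hu, rfl⟩ := exists_isUnit_mul_pow_of_maximalIdeal_eq_span hπ ha
  obtain ⟨v, n, hv, rfl⟩ := exists_isUnit_mul_pow_of_maximalIdeal_eq_span hπ hb
  rcases le_total m n with hmn | hnm
  · exact Or.inl (hu.mul_left_dvd.mpr ((pow_dvd_pow π hmn).mul_left v))
  · exact Or.inr (hv.mul_left_dvd.mpr ((pow_dvd_pow π hnm).mul_left u))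

end PrincipalMaximalIdeal

end ChainRing

/-- A finite commutative ring is a chain ring (ideals linearly ordered by inclusion)
iff it is a local ring whose maximal ideal is principal. -/
theorem stmt_0 (R : Type*) [CommRing R] [Fintype R] [Nontrivial R] :
    (∀ I J : Ideal R, I ≤ J ∨ J ≤ I) ↔
      ∃ _ : IsLocalRing R, (IsLocalRing.maximalIdeal R).IsPrincipal := by
  constructor
  · intro h
    have : PreValuationRing R := PreValuationRing.iff_ideal_total.mpr ⟨h⟩
    have : IsBezout R := isBezout_of_le_total h
    exact ⟨inferInstance, IsPrincipalIdealRing.principal _⟩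
  · rintro ⟨_, π, hπ⟩
    have : PreValuationRing R :=
      PreValuationRing.iff_dvd_total.mpr ⟨dvd_total_of_maximalIdeal_eq_span hπ⟩
    exact Std.Total.total
end

section
/- Let S be a commutative ring with complete family of pairwise orthogonal idempotents e_1, ..., e_k, and let K ⊆ S^n be an S-submodule with K = ⊕_i e_i K_i for S-submodules K_i of S^n. Then the Euclidean dual satisfies K^⊥ = ⊕_i e_i (K_i^⊥), where duals are taken with respect to the standard bilinear form on S^n. -/
/-!
Since `x = ∑ eᵢ x` and `eᵢ eⱼ = 0` for `i ≠ j`, a vector lies in `⊕ eᵢ Lᵢ` exactly when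
`eᵢ x ∈ Lᵢ` for every `i`. On the other side, the dual of a sum is the intersection of the duals,
and `x · (eᵢ y) = (eᵢ x) · y`, so `x ∈ K^⊥` exactly when `eᵢ x ∈ Kᵢ^⊥` for every `i`.
-/

/-- The Euclidean dual of a submodule of S^n. -/
def eucDual {S : Type*} [CommRing S] {n : ℕ} (K : Submodule S (Fin n → S)) :
    Submodule S (Fin n → S) where
  carrier := {x | ∀ y ∈ K, ∑ j, x j * y j = 0}
  zero_mem' := by intro y hy; simp
  add_mem' := by
    intro x x' hx hx' y hy
    simp only [Pi.add_apply, add_mul, Finset.sum_add_distrib, hx y hy, hx' y hy, add_zero]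
  smul_mem' := by
    intro c x hx y hy
    simp only [Pi.smul_apply, smul_eq_mul, mul_assoc, ← Finset.mul_sum, hx y hy, mul_zero]

section eucDual

variable {S : Type*} [CommRing S] {n : ℕ}

theorem mem_eucDual_iff {K : Submodule S (Fin n → S)} {x : Fin n → S} :
    x ∈ eucDual K ↔ ∀ y ∈ K, x ⬝ᵥ y = 0 :=
  Iff.rfl

theorem eucDual_antitone : Antitone (eucDual : Submodule S (Fin n → S) → _) :=
  fun _ _ hKL _ hx y hy ↦ hx y (hKL hy)

theorem eucDual_iSup {ι : Sort*} (K : ι → Submodule S (Fin n → S)) :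
    eucDual (⨆ i, K i) = ⨅ i, eucDual (K i) := by
  refine le_antisymm (le_iInf fun i ↦ eucDual_antitone (le_iSup K i)) fun x hx ↦ ?_
  rw [Submodule.mem_iInf] at hx
  refine mem_eucDual_iff.2 fun y hy ↦ ?_
  induction hy using Submodule.iSup_induction' with
  | mem i y hy => exact hx i y hy
  | zero => exact dotProduct_zero x
  | add y z _ _ hy hz => rw [dotProduct_add, hy, hz, add_zero]

theorem mem_eucDual_map_lsmul_iff {K : Submodule S (Fin n → S)} {c : S} {x : Fin n → S} :
    x ∈ eucDual (K.map (LinearMap.lsmul S (Fin n → S) c)) ↔ c • x ∈ eucDual K := by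
  simp only [mem_eucDual_iff, Submodule.mem_map, forall_exists_index, and_imp,
    forall_apply_eq_imp_iff₂, LinearMap.lsmul_apply, dotProduct_smul, smul_dotProduct]

end eucDual

theorem CompleteOrthogonalIdempotents.mem_iSup_map_lsmul_iff {R M ι : Type*} [CommSemiring R]
    [AddCommMonoid M] [Module R M] [Fintype ι] {e : ι → R} (he : CompleteOrthogonalIdempotents e)
    {L : ι → Submodule R M} {x : M} :
    x ∈ ⨆ i, (L i).map (LinearMap.lsmul R M (e i)) ↔ ∀ i, e i • x ∈ L i := by
  classical
  constructor
  · intro hx i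
    induction hx using Submodule.iSup_induction' with
    | mem j y hy =>
      obtain ⟨z, hz, rfl⟩ := hy
      rw [LinearMap.lsmul_apply, smul_smul, he.mul_eq]
      split_ifs with hij
      · subst hij
        exact (L i).smul_mem _ hz
      · rw [zero_smul]
        exact (L i).zero_mem
    | zero => simp
    | add y z _ _ hy hz => simpa only [smul_add] using (L i).add_mem hy hz
  · intro hx
    have hdecomp : x = ∑ i, e i • e i • x := by
      simp only [smul_smul, (he.idem _).eq, ← Finset.sum_smul, he.complete, one_smul]
    rw [hdecomp]
    exact Submodule.sum_mem _ fun i _ ↦ Submodule.mem_iSup_of_mem i ⟨_, hx i, rfl⟩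

theorem stmt_4_general (S : Type*) [CommRing S] (k n : ℕ) (e : Fin k → S)
    (horth : ∀ i j, i ≠ j → e i * e j = 0)
    (hsum : ∑ i, e i = 1)
    (K : Submodule S (Fin n → S)) (K' : Fin k → Submodule S (Fin n → S))
    (hK : K = ⨆ i, (K' i).map (LinearMap.lsmul S (Fin n → S) (e i))) :
    eucDual K = ⨆ i, (eucDual (K' i)).map (LinearMap.lsmul S (Fin n → S) (e i)) := by
  have he : CompleteOrthogonalIdempotents e :=
    CompleteOrthogonalIdempotents.iff_ortho_complete.2 ⟨fun i j hij ↦ horth i j hij, hsum⟩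
  ext x
  rw [he.mem_iSup_map_lsmul_iff, hK, eucDual_iSup, Submodule.mem_iInf]
  exact forall_congr' fun i ↦ mem_eucDual_map_lsmul_iff

/-- If K = ⊕ e_i K_i for a complete family of pairwise orthogonal idempotents, then
K^⊥ = ⊕ e_i (K_i^⊥). -/
theorem stmt_4 (S : Type*) [CommRing S] (k n : ℕ) (e : Fin k → S)
    (hidem : ∀ i, e i * e i = e i)
    (horth : ∀ i j, i ≠ j → e i * e j = 0)
    (hsum : ∑ i, e i = 1)
    (K : Submodule S (Fin n → S)) (K' : Fin k → Submodule S (Fin n → S))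
    (hK : K = ⨆ i, (K' i).map (LinearMap.lsmul S (Fin n → S) (e i))) :
    eucDual K = ⨆ i, (eucDual (K' i)).map (LinearMap.lsmul S (Fin n → S) (e i)) :=
  stmt_4_general S k n e horth hsum K K' hK
end

section
/- Let S be a commutative ring and E_1, ..., E_m idempotents of S. Let θ_1, ..., θ_m be pairwise orthogonal idempotents of S with Σ θ_i = 1, each θ_i commuting with all E_j, and suppose E_i E_j = Π_{k=1}^m E_k for all i ≠ j. Define D_1 = Σ_i θ_i E_i and D_2 = Σ_i θ_i E_{σ(i)} for a permutation σ with σ(i) ≠ i for all i. Then D_1 D_2 = Π_{k=1}^m E_k. -/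
/-- If E_i E_j = Π_k E_k for all i ≠ j, and θ_i are pairwise orthogonal idempotents
summing to 1, then D_1 = Σ θ_i E_i and D_2 = Σ θ_i E_{σ(i)} (σ fixed-point-free)
satisfy D_1 D_2 = Π_k E_k. -/
theorem stmt_11 (S : Type*) [CommRing S] (m : ℕ) (E θ : Fin m → S)
    (hE : ∀ i, E i * E i = E i)
    (hθ : ∀ i, θ i * θ i = θ i)
    (hθorth : ∀ i j, i ≠ j → θ i * θ j = 0)
    (hθsum : ∑ i, θ i = 1)
    (hEE : ∀ i j, i ≠ j → E i * E j = ∏ k, E k)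
    (σ : Equiv.Perm (Fin m)) (hσ : ∀ i, σ i ≠ i) :
    (∑ i, θ i * E i) * (∑ i, θ i * E (σ i)) = ∏ k, E k := by
  rw [Finset.sum_mul_sum]
  have h : ∀ i ∈ Finset.univ, (∑ j, (θ i * E i) * (θ j * E (σ j))) = θ i * ∏ k, E k := by
    intro i _
    rw [Finset.sum_eq_single i]
    · have : (θ i * E i) * (θ i * E (σ i)) = (θ i * θ i) * (E i * E (σ i)) := by ring
      rw [this, hθ, hEE i (σ i) (Ne.symm (hσ i))]
    · intro j _ hj
      have : (θ i * E i) * (θ j * E (σ j)) = (θ i * θ j) * (E i * E (σ j)) := by ring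
      rw [this, hθorth i j (Ne.symm hj), zero_mul]
    · intro h; exact absurd (Finset.mem_univ i) h
  rw [Finset.sum_congr rfl h, ← Finset.sum_mul, hθsum, one_mul]
end

section
/- Let R be a finite commutative chain ring with residue field F_q, and t_1(X_1), ..., t_s(X_s) ∈ R[X_i] monic polynomials whose reductions mod the maximal ideal are squarefree over F_q. Then the quotient ring ℛ = R[X_1, ..., X_s]/⟨t_1(X_1), ..., t_s(X_s)⟩ is isomorphic to a finite direct product of finite commutative chain rings. -/
/-!
A finite chain ring `R` is an artinian local ring whose maximal ideal is principal, say `(π)`.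
The ring `ℛ` is finite over `R`, being generated by roots `xᵢ` of the monic `tᵢ`, and it is
unramified over `R`: as `tᵢ mod 𝔪` is separable and `𝔪` is nilpotent, `tᵢ'(xᵢ)` is a unit.
Being artinian, `ℛ` is the product of its localizations at its finitely many primes. Each of
them is local and unramified over `R`, so its maximal ideal is generated by `π`; and an
artinian local ring with principal maximal ideal has totally ordered ideals.
-/

open Polynomial IsLocalRing

theorem Polynomial.isUnit_aeval_derivative_of_separable_map {R A : Type*} [CommRing R]
    [CommRing A] [Algebra R A] {I : Ideal R} (hI : I ≤ nilradical R) {t : R[X]}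
    (ht : (t.map (Ideal.Quotient.mk I)).Separable) {x : A} (hx : aeval x t = 0) :
    IsUnit (aeval x (derivative t)) := by
  -- Lift a Bezout identity `a t + b t' = 1` modulo `I`; its defect is nilpotent.
  obtain ⟨a, b, hab⟩ := ht
  obtain ⟨a, rfl⟩ := map_surjective _ Ideal.Quotient.mk_surjective a
  obtain ⟨b, rfl⟩ := map_surjective _ Ideal.Quotient.mk_surjective b
  have hnil : IsNilpotent (a * t + b * derivative t - 1) := by
    refine Polynomial.isNilpotent_iff.mpr fun n => hI ?_
    rw [← Ideal.Quotient.eq_zero_iff_mem, ← coeff_map]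
    simp [Polynomial.map_sub, Polynomial.map_add, Polynomial.map_mul, ← derivative_map, hab]
  have hunit := (hnil.map (aeval x)).isUnit_add_one
  simp only [map_sub, map_add, map_mul, hx, mul_zero, zero_add, map_one, sub_add_cancel] at hunit
  exact isUnit_of_mul_isUnit_right hunit

theorem Algebra.FormallyUnramified.of_adjoin_eq_top {R A : Type*} [CommRing R] [CommRing A]
    [Algebra R A] {s : Set A} (hs : Algebra.adjoin R s = ⊤)
    (h : ∀ x ∈ s, ∃ p : R[X], aeval x p = 0 ∧ IsUnit (aeval x (derivative p))) :
    Algebra.FormallyUnramified R A := by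
  rw [Algebra.FormallyUnramified.iff_comp_injective]
  intro B _ _ I hI f₁ f₂ e
  refine AlgHom.ext_of_adjoin_eq_top hs fun x hx => ?_
  obtain ⟨p, hp, hunit⟩ := h x hx
  have hmem : f₁ x - f₂ x ∈ I := by
    simpa [Ideal.Quotient.mk_eq_mk_iff_sub_mem] using AlgHom.congr_fun e x
  -- Taylor expansion at `f₂ x` with a square-zero increment.
  have := Polynomial.eval_add_of_sq_eq_zero (p.map (algebraMap R B)) (f₂ x) (f₁ x - f₂ x)
    (show (f₁ x - f₂ x) ^ 2 ∈ ⊥ from hI ▸ Ideal.pow_mem_pow hmem 2)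
  simp only [add_sub_cancel, eval_map_algebraMap, aeval_algHom_apply, hp, map_zero,
    derivative_map, zero_add] at this
  rwa [eq_comm, (hunit.map f₂).mul_right_eq_zero, sub_eq_zero] at this

theorem Ideal.isPrincipal_of_le_total {R : Type*} [CommRing R] [IsNoetherianRing R]
    (h : ∀ I J : Ideal R, I ≤ J ∨ J ≤ I) (I : Ideal R) : I.IsPrincipal := by
  obtain ⟨_, ⟨a, ha, rfl⟩, hmax⟩ := set_has_maximal_iff_noetherian.mpr inferInstance
    ((fun a : R => Ideal.span {a}) '' (I : Set R)) ⟨_, ⟨0, I.zero_mem, rfl⟩⟩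
  refine ⟨a, le_antisymm (fun b hb => ?_) ((Ideal.span_singleton_le_iff_mem I).mpr ha)⟩
  rcases h (Ideal.span {b}) (Ideal.span {a}) with hba | hab
  · exact hba (Ideal.mem_span_singleton_self b)
  · show b ∈ Ideal.span {a}
    rw [hab.eq_of_not_lt (hmax _ ⟨b, hb, rfl⟩)]
    exact Ideal.mem_span_singleton_self b

theorem preValuationRing_of_isPrincipal_maximalIdeal {C : Type*} [CommRing C] [IsLocalRing C]
    [Ring.KrullDimLE 0 C] (h : (maximalIdeal C).IsPrincipal) : PreValuationRing C := by
  obtain ⟨π, hπ : maximalIdeal C = Ideal.span {π}⟩ := h.principal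
  have hdvd : ∀ x, ¬IsUnit x → π ∣ x := fun x hx =>
    Ideal.mem_span_singleton.mp (hπ ▸ (mem_maximalIdeal x).mpr hx)
  obtain ⟨n, hn⟩ : IsNilpotent π := Ring.KrullDimLE.isNilpotent_iff_mem_maximalIdeal.mpr
    (hπ ▸ Ideal.mem_span_singleton_self π)
  -- Cancel common factors `π` from `x` and `y` until one of them is a unit.
  have key : ∀ k (x y : C), ¬π ^ k ∣ x → x ∣ y ∨ y ∣ x := by
    intro k
    induction k with
    | zero => simp
    | succ k ih =>
      intro x y hx
      by_cases hxu : IsUnit x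
      · exact .inl hxu.dvd
      by_cases hyu : IsUnit y
      · exact .inr hyu.dvd
      obtain ⟨x, rfl⟩ := hdvd x hxu
      obtain ⟨y, rfl⟩ := hdvd y hyu
      have hx' : ¬π ^ k ∣ x := fun hk => hx (pow_succ' π k ▸ mul_dvd_mul_left π hk)
      exact (ih x y hx').imp (mul_dvd_mul_left π) (mul_dvd_mul_left π)
  refine PreValuationRing.iff_dvd_total.mpr ⟨fun x y => ?_⟩
  by_cases hy : π ^ n ∣ y
  · rw [hn, zero_dvd_iff] at hy
    exact .inl (hy ▸ dvd_zero x)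
  · exact (key n y x hy).symm

theorem isLocalHom_of_krullDimLE_zero {R S : Type*} [CommRing R] [IsLocalRing R]
    [Ring.KrullDimLE 0 R] [Ring S] [Nontrivial S] (f : R →+* S) : IsLocalHom f :=
  ⟨fun _ ha => by_contra fun h =>
    ((Ring.KrullDimLE.isNilpotent_iff_mem_nonunits.mpr h).map f).not_isUnit ha⟩

theorem Algebra.FormallyUnramified.isPrincipal_maximalIdeal {R S : Type*} [CommRing R]
    [CommRing S] [Algebra R S] [IsLocalRing R] [IsLocalRing S] [IsLocalHom (algebraMap R S)]
    [Algebra.EssFiniteType R S] [Algebra.FormallyUnramified R S]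
    (h : (maximalIdeal R).IsPrincipal) : (maximalIdeal S).IsPrincipal := by
  obtain ⟨π, hπ : maximalIdeal R = Ideal.span {π}⟩ := h.principal
  refine ⟨algebraMap R S π, ?_⟩
  rw [← Algebra.FormallyUnramified.map_maximalIdeal (R := R), hπ, Ideal.map_span,
    Set.image_singleton]

structure IsFiniteChainRing (C : Type*) [CommRing C] : Prop where
  finite : Finite C
  isLocalRing : IsLocalRing C
  preValuationRing : PreValuationRing C

theorem IsFiniteChainRing.of_ringEquiv {C D : Type*} [CommRing C] [CommRing D]
    (h : IsFiniteChainRing C) (e : C ≃+* D) : IsFiniteChainRing D := by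
  have := h.finite
  have := h.isLocalRing
  have := h.preValuationRing
  have : Nontrivial D := e.symm.toEquiv.nontrivial
  exact ⟨.of_equiv C e.toEquiv, .of_surjective' e.toRingHom e.surjective,
    Function.Surjective.preValuationRing (e : C →ₙ* D) e.surjective⟩

theorem exists_ringEquiv_pi_fin {A ι : Type*} [CommRing A] [Finite ι] (C : ι → Type*)
    [∀ i, CommRing (C i)] (hC : ∀ i, IsFiniteChainRing (C i)) (e : A ≃+* ∀ i, C i) :
    ∃ (k : ℕ) (D : Fin k → Type) (_ : ∀ j, CommRing (D j)),
      (∀ j, IsFiniteChainRing (D j)) ∧ Nonempty (A ≃+* ∀ j, D j) := by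
  have : ∀ i, Small.{0} (C i) := fun i => have := (hC i).finite; inferInstance
  let σ := (Finite.equivFin ι).symm
  refine ⟨Nat.card ι, fun j => Shrink.{0} (C (σ j)), inferInstance,
    fun j => (hC (σ j)).of_ringEquiv (Shrink.ringEquiv _).symm, ⟨?_⟩⟩
  exact e.trans ((RingEquiv.piCongrLeft C σ).symm.trans
    (RingEquiv.piCongrRight fun j => (Shrink.ringEquiv _).symm))

theorem isFiniteChainRing_localization {R A : Type*} [CommRing R] [IsLocalRing R]
    [Ring.KrullDimLE 0 R] [CommRing A] [Algebra R A] [Finite A] [Algebra.EssFiniteType R A]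
    [Algebra.FormallyUnramified R A] (hR : (maximalIdeal R).IsPrincipal) (p : Ideal A)
    [p.IsPrime] : IsFiniteChainRing (Localization.AtPrime p) := by
  have := isLocalHom_of_krullDimLE_zero (algebraMap R (Localization.AtPrime p))
  exact ⟨.of_surjective _ (IsArtinianRing.localization_surjective p.primeCompl _), inferInstance,
    preValuationRing_of_isPrincipal_maximalIdeal
      (Algebra.FormallyUnramified.isPrincipal_maximalIdeal hR)⟩

namespace MvPolynomial

variable {R σ : Type*} [CommRing R] (t : σ → R[X])

abbrev QuotByUnivariate : Type _ :=
  MvPolynomial σ R ⧸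
    Ideal.span (Set.range fun i => (Polynomial.aeval (X i) (t i) : MvPolynomial σ R))

namespace QuotByUnivariate

noncomputable def root (i : σ) : QuotByUnivariate t := Ideal.Quotient.mk _ (X i)

theorem aeval_root (i : σ) : Polynomial.aeval (root t i) (t i) = 0 := by
  rw [root, ← Ideal.Quotient.mkₐ_eq_mk R, Polynomial.aeval_algHom_apply,
    Ideal.Quotient.mkₐ_eq_mk, Ideal.Quotient.eq_zero_iff_mem]
  exact Ideal.subset_span ⟨i, rfl⟩

theorem adjoin_range_root : Algebra.adjoin R (Set.range (root t)) = ⊤ := by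
  change Algebra.adjoin R (Set.range (Ideal.Quotient.mkₐ R _ ∘ X)) = ⊤
  rw [Set.range_comp, Algebra.adjoin_image, adjoin_range_X, Algebra.map_top,
    AlgHom.range_eq_top]
  exact Ideal.Quotient.mkₐ_surjective R _

theorem moduleFinite [Finite σ] (hmonic : ∀ i, (t i).Monic) :
    Module.Finite R (QuotByUnivariate t) := by
  refine ⟨?_⟩
  rw [← Algebra.top_toSubmodule, ← adjoin_range_root]
  refine fg_adjoin_of_finite (Set.finite_range _) ?_
  rintro _ ⟨i, rfl⟩
  exact ⟨t i, hmonic i, aeval_root t i⟩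

theorem formallyUnramified [IsLocalRing R] [Ring.KrullDimLE 0 R]
    (hsep : ∀ i, ((t i).map (residue R)).Separable) :
    Algebra.FormallyUnramified R (QuotByUnivariate t) := by
  refine .of_adjoin_eq_top (adjoin_range_root t) ?_
  rintro _ ⟨i, rfl⟩
  exact ⟨t i, aeval_root t i, isUnit_aeval_derivative_of_separable_map
    (Ring.KrullDimLE.nilradical_eq_maximalIdeal R).ge (hsep i) (aeval_root t i)⟩

end QuotByUnivariate
end MvPolynomial

/-- Let R be a finite commutative chain ring and t_1(X_1), …, t_s(X_s) monic univariate
polynomials whose reductions modulo the maximal ideal are squarefree. Then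
ℛ = R[X_1, …, X_s]/⟨t_1(X_1), …, t_s(X_s)⟩ is isomorphic to a finite direct product of
finite commutative chain rings. -/
theorem stmt_18 (R : Type*) [CommRing R] [Fintype R] [IsLocalRing R]
    (hchain : ∀ I J : Ideal R, I ≤ J ∨ J ≤ I)
    (s : ℕ) (t : Fin s → R[X]) (hmonic : ∀ i, (t i).Monic)
    (hsqf : ∀ i, Squarefree ((t i).map (IsLocalRing.residue R))) :
    ∃ (k : ℕ) (C : Fin k → Type) (inst : ∀ j, CommRing (C j)),
      (∀ j, Finite (C j)) ∧
      (∀ j, Nontrivial (C j)) ∧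
      (∀ j, IsLocalRing (C j)) ∧
      (∀ j, ∀ I J : Ideal (C j), I ≤ J ∨ J ≤ I) ∧
      Nonempty
        ((MvPolynomial (Fin s) R ⧸
            Ideal.span (Set.range fun i => (Polynomial.aeval (MvPolynomial.X i) (t i) : MvPolynomial (Fin s) R)))
          ≃+* ∀ j, C j) := by
  have hR : (maximalIdeal R).IsPrincipal := Ideal.isPrincipal_of_le_total hchain _
  have : Finite (ResidueField R) := .of_surjective _ residue_surjective
  have := MvPolynomial.QuotByUnivariate.moduleFinite t hmonic
  have : Finite (MvPolynomial.QuotByUnivariate t) := Module.finite_of_finite R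
  have := MvPolynomial.QuotByUnivariate.formallyUnramified t fun i =>
    PerfectField.separable_iff_squarefree.mpr (hsqf i)
  obtain ⟨k, C, _, hC, e⟩ := exists_ringEquiv_pi_fin _
    (fun p : PrimeSpectrum _ => isFiniteChainRing_localization hR p.asIdeal)
    (PrimeSpectrum.toPiLocalizationEquiv (MvPolynomial.QuotByUnivariate t)).toRingEquiv
  exact ⟨k, C, _, fun j => (hC j).finite, fun j => (hC j).isLocalRing.toNontrivial,
    fun j => (hC j).isLocalRing,
    fun j => (PreValuationRing.iff_ideal_total.mp (hC j).preValuationRing).total, e⟩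
end

section
/- Let R be a finite commutative chain ring with residue field F_q of characteristic p, and let n be coprime to p. Then every ideal of R[X]/⟨X^n − 1⟩ is principal. -/
/-!
Since `n` is invertible in the residue field, `X ^ n - 1` is separable, hence squarefree, modulo
the maximal ideal `m = (t)` of `R`; so the nilradical of the finite ring `R[X] ⧸ (X ^ n - 1)` is
generated by `t`. An Artinian ring is the product of its localizations at maximal ideals, and the
only prime of each factor is its nilradical, which is principal; a ring whose primes are all
principal is a principal ideal ring.
-/

open Polynomial

theorem Ideal.isPrincipal_of_fg_of_le_total {R : Type*} [Semiring R]
    (hchain : ∀ I J : Ideal R, I ≤ J ∨ J ≤ I) {I : Ideal R} (hI : I.FG) : I.IsPrincipal := by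
  classical
  obtain ⟨s, rfl⟩ := hI
  induction s using Finset.induction with
  | empty => exact ⟨0, by simp⟩
  | insert a s _ ih =>
    obtain ⟨b, hb⟩ := ih
    rw [Finset.coe_insert, Ideal.span_insert, hb]
    rcases hchain (Ideal.span {a}) (Ideal.span {b}) with h | h
    · exact ⟨b, sup_eq_right.mpr h⟩
    · exact ⟨a, sup_eq_left.mpr h⟩

theorem IsLocalization.map_nilradical {R : Type*} [CommRing R] (M : Submonoid R) (S : Type*)
    [CommRing S] [Algebra R S] [IsLocalization M S] :
    (nilradical R).map (algebraMap R S) = nilradical S := by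
  simpa [nilradical] using IsLocalization.map_radical M S (⊥ : Ideal R)

theorem IsArtinianRing.isPrincipalIdealRing_of_isPrincipal_nilradical {A : Type*} [CommRing A]
    [IsArtinianRing A] (h : (nilradical A).IsPrincipal) : IsPrincipalIdealRing A := by
  have hloc (P : MaximalSpectrum A) : IsPrincipalIdealRing (Localization.AtPrime P.asIdeal) := by
    refine .of_prime fun Q _ ↦ ?_
    rw [Ring.KrullDimLE.eq_maximalIdeal_of_isPrime Q, ← Ring.KrullDimLE.nilradical_eq_maximalIdeal,
      ← IsLocalization.map_nilradical P.asIdeal.primeCompl]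
    exact h.map_ringHom _
  exact .of_surjective (MaximalSpectrum.toPiLocalizationEquiv A).symm
    (MaximalSpectrum.toPiLocalizationEquiv A).symm.surjective

theorem Polynomial.nilradical_quotient_le_map_ker {R K : Type*} [CommRing R] [CommRing K]
    {φ : R →+* K} (hφ : Function.Surjective φ) {f : R[X]} (hf : IsRadical (f.map φ)) :
    nilradical (R[X] ⧸ Ideal.span {f}) ≤ ((RingHom.ker φ).map C).map (Ideal.Quotient.mk _) := by
  intro y ⟨k, hk⟩
  obtain ⟨g, rfl⟩ := Ideal.Quotient.mk_surjective y
  have hfg : f ∣ g ^ k := by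
    rwa [← Ideal.mem_span_singleton, ← Ideal.Quotient.eq_zero_iff_mem, map_pow]
  obtain ⟨h, hh⟩ := hf k _ (by simpa only [Polynomial.map_pow] using Polynomial.map_dvd φ hfg)
  obtain ⟨h, rfl⟩ := Polynomial.map_surjective φ hφ h
  have hker : g - f * h ∈ (RingHom.ker φ).map C := by
    rw [← Polynomial.ker_mapRingHom, RingHom.mem_ker]
    simp [hh]
  have : Ideal.Quotient.mk (Ideal.span {f}) g = Ideal.Quotient.mk _ (g - f * h) := by
    rw [map_sub, map_mul, Ideal.Quotient.mk_singleton_self, zero_mul, sub_zero]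
  rw [this]
  exact Ideal.mem_map_of_mem _ hker

theorem Polynomial.nilradical_quotient_eq_map_ker {R K : Type*} [CommRing R] [CommRing K]
    {φ : R →+* K} (hφ : Function.Surjective φ) (hker : RingHom.ker φ ≤ nilradical R) {f : R[X]}
    (hf : IsRadical (f.map φ)) :
    nilradical (R[X] ⧸ Ideal.span {f}) = ((RingHom.ker φ).map C).map (Ideal.Quotient.mk _) := by
  refine le_antisymm (nilradical_quotient_le_map_ker hφ hf) ?_
  rw [Ideal.map_map, Ideal.map_le_iff_le_comap]
  exact fun x hx ↦ mem_nilradical.mpr ((mem_nilradical.mp (hker hx)).map _)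

theorem stmt_19_general (R : Type*) [CommRing R] [Fintype R] [IsLocalRing R]
    (hchain : ∀ I J : Ideal R, I ≤ J ∨ J ≤ I)
    (p : ℕ) (hchar : CharP (IsLocalRing.ResidueField R) p)
    (n : ℕ) (hn : 0 < n) (hco : Nat.Coprime n p) :
    ∀ I : Ideal (R[X] ⧸ Ideal.span {(X : R[X]) ^ n - 1}), I.IsPrincipal := by
  have hmonic : ((X : R[X]) ^ n - 1).Monic := by
    simpa using monic_X_pow_sub_C (1 : R) hn.ne'
  have : Module.Finite R (R[X] ⧸ Ideal.span {(X : R[X]) ^ n - 1}) := hmonic.finite_quotient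
  have : Finite (R[X] ⧸ Ideal.span {(X : R[X]) ^ n - 1}) := Module.finite_of_finite R
  have hn_ne : (n : IsLocalRing.ResidueField R) ≠ 0 := by
    rw [ne_eq, CharP.cast_eq_zero_iff _ p]
    exact fun hpn ↦ CharP.char_ne_one (IsLocalRing.ResidueField R) p (hco.symm.eq_one_of_dvd hpn)
  have hrad : IsRadical (((X : R[X]) ^ n - 1).map (IsLocalRing.residue R)) := by
    refine Squarefree.isRadical (Separable.squarefree ?_)
    simpa using X_pow_sub_one_separable_iff.mpr hn_ne
  have hmax : (IsLocalRing.maximalIdeal R).IsPrincipal :=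
    Ideal.isPrincipal_of_fg_of_le_total hchain (IsNoetherian.noetherian _)
  have hnil : (nilradical (R[X] ⧸ Ideal.span {(X : R[X]) ^ n - 1})).IsPrincipal := by
    rw [nilradical_quotient_eq_map_ker IsLocalRing.residue_surjective
      (by rw [IsLocalRing.ker_residue, Ring.KrullDimLE.nilradical_eq_maximalIdeal]) hrad,
      IsLocalRing.ker_residue]
    exact (hmax.map_ringHom C).map_ringHom _
  have := IsArtinianRing.isPrincipalIdealRing_of_isPrincipal_nilradical hnil
  exact IsPrincipalIdealRing.principal

set_option synthInstance.maxHeartbeats 800000 in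
/-- Over a finite commutative chain ring R with residue field of characteristic p, if
gcd(n, p) = 1 then every ideal of R[X]/⟨X^n − 1⟩ (i.e. every cyclic code of length n
over R) is principal. -/
theorem stmt_19 (R : Type*) [CommRing R] [Fintype R] [IsLocalRing R]
    (hchain : ∀ I J : Ideal R, I ≤ J ∨ J ≤ I)
    (p : ℕ) (hp : p.Prime) (hchar : CharP (IsLocalRing.ResidueField R) p)
    (n : ℕ) (hn : 0 < n) (hco : Nat.Coprime n p) :
    ∀ I : Ideal (R[X] ⧸ Ideal.span {(X : R[X]) ^ n - 1}), I.IsPrincipal :=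
  stmt_19_general R hchain p hchar n hn hco
end
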